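/- Let p ≥ 2 and q = p/(p−1). For every ε > 0 there is a constant C depending only on p such that for all real numbers a, b: | |b|^{p-2} b − |a|^{p-2} a |^q ≤ C ( ε · | |b|^{(p-2)/2} b − |a|^{(p-2)/2} a |² + ε^{−p/(p−2)} (|b|^p + |a|^p) ). -/

import Mathlib

/-!
Write `σ r x = |x| ^ r * x`. The identity `σ (p - 2) = σ γ ∘ σ ((p - 2) / 2)` with
`γ = (p - 2) / p ∈ [0, 1)`, together with the Lipschitz bound
`|σ γ v - σ γ u| ≤ (γ + 1) M ^ γ |v - u|` for `|u|, |v| ≤ M` (a consequence of Bernoulli's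
inequality), gives, with `s = (p - 2) / 2`,
`|σ (p - 2) b - σ (p - 2) a| ≤ 2 max(|a|, |b|) ^ s |σ s b - σ s a|`.
Raising this to the power `q < 2` and applying Young's inequality with the conjugate exponents
`2 / q` and `2 / (2 - q)`, weighted by `ε`, splits the right-hand side into
`ε |σ s b - σ s a| ^ 2 + ε ^ (-p / (p - 2)) max(|a|, |b|) ^ p`.
-/

open Real

noncomputable def signedPow (r x : ℝ) : ℝ := |x| ^ r * x

lemma signedPow_neg (r x : ℝ) : signedPow r (-x) = -signedPow r x := by
  simp [signedPow]

lemma signedPow_of_nonneg {r x : ℝ} (hr : r + 1 ≠ 0) (hx : 0 ≤ x) :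
    signedPow r x = x ^ (r + 1) := by
  rw [signedPow, abs_of_nonneg hx, rpow_add_one' hx hr]

lemma abs_signedPow {r : ℝ} (hr : r + 1 ≠ 0) (x : ℝ) : |signedPow r x| = |x| ^ (r + 1) := by
  rw [signedPow, abs_mul, abs_of_nonneg (rpow_nonneg (abs_nonneg x) r),
    rpow_add_one' (abs_nonneg x) hr]

lemma signedPow_signedPow (r s x : ℝ) :
    signedPow r (signedPow s x) = signedPow (r * (s + 1) + s) x := by
  rcases eq_or_ne x 0 with rfl | hx
  · simp [signedPow]
  have hx' : 0 < |x| := abs_pos.2 hx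
  have habs : |signedPow s x| = |x| ^ (s + 1) := by
    rw [signedPow, abs_mul, abs_of_nonneg (rpow_nonneg hx'.le s), rpow_add_one hx'.ne']
  rw [signedPow, habs, ← rpow_mul hx'.le, signedPow, signedPow, ← mul_assoc, ← rpow_add hx',
    mul_comm (s + 1)]

lemma signedPow_monotone {r : ℝ} (hr : -1 < r) : Monotone (signedPow r) := by
  have hr' : r + 1 ≠ 0 := by linarith
  intro u v huv
  rcases le_total 0 u with hu | hu
  · rw [signedPow_of_nonneg hr' hu, signedPow_of_nonneg hr' (hu.trans huv)]
    exact rpow_le_rpow hu huv (by linarith)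
  rcases le_total v 0 with hv | hv
  · have h := rpow_le_rpow (neg_nonneg.2 hv) (neg_le_neg huv) (by linarith : 0 ≤ r + 1)
    rw [← signedPow_of_nonneg hr' (neg_nonneg.2 hu),
      ← signedPow_of_nonneg hr' (neg_nonneg.2 hv), signedPow_neg, signedPow_neg] at h
    linarith
  · exact (mul_nonpos_of_nonneg_of_nonpos (rpow_nonneg (abs_nonneg u) r) hu).trans
      (mul_nonneg (rpow_nonneg (abs_nonneg v) r) hv)

lemma rpow_add_one_sub_rpow_add_one_le {r u v : ℝ} (hr : 0 ≤ r) (hu : 0 ≤ u) (huv : u ≤ v) :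
    v ^ (r + 1) - u ^ (r + 1) ≤ (r + 1) * v ^ r * (v - u) := by
  obtain rfl | hv := (hu.trans huv).eq_or_lt
  · obtain rfl : u = 0 := le_antisymm huv hu
    simp
  have hbern := one_add_mul_self_le_rpow_one_add (s := u / v - 1)
    (by linarith [div_nonneg hu hv.le]) (p := r + 1) (by linarith)
  rw [add_sub_cancel, div_rpow hu hv.le, le_div_iff₀ (by positivity), rpow_add_one hv.ne',
    mul_comm] at hbern
  rw [rpow_add_one hv.ne']
  have : v ^ r * v * (1 + (r + 1) * (u / v - 1)) = v ^ r * v - (r + 1) * v ^ r * (v - u) := by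
    field_simp
    ring
  linarith

lemma signedPow_sub_signedPow_le_of_nonneg {r u v M : ℝ} (hr : 0 ≤ r) (hu : 0 ≤ u)
    (huv : u ≤ v) (hvM : v ≤ M) :
    signedPow r v - signedPow r u ≤ (r + 1) * M ^ r * (v - u) := by
  have hr' : r + 1 ≠ 0 := by linarith
  rw [signedPow_of_nonneg hr' hu, signedPow_of_nonneg hr' (hu.trans huv)]
  calc v ^ (r + 1) - u ^ (r + 1) ≤ (r + 1) * v ^ r * (v - u) :=
        rpow_add_one_sub_rpow_add_one_le hr hu huv
    _ ≤ (r + 1) * M ^ r * (v - u) := by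
        gcongr
        linarith

lemma abs_signedPow_sub_signedPow_le {r u v M : ℝ} (hr : 0 ≤ r) (hu : |u| ≤ M)
    (hv : |v| ≤ M) :
    |signedPow r v - signedPow r u| ≤ (r + 1) * M ^ r * |v - u| := by
  wlog huv : u ≤ v generalizing u v
  · rw [abs_sub_comm, abs_sub_comm v]
    exact this hv hu (le_of_not_ge huv)
  rw [abs_of_nonneg (sub_nonneg.2 (signedPow_monotone (by linarith) huv)),
    abs_of_nonneg (sub_nonneg.2 huv)]
  rcases le_total 0 u with hu0 | hu0
  · exact signedPow_sub_signedPow_le_of_nonneg hr hu0 huv ((le_abs_self v).trans hv)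
  rcases le_total v 0 with hv0 | hv0
  · have h := signedPow_sub_signedPow_le_of_nonneg hr (neg_nonneg.2 hv0) (neg_le_neg huv)
      ((neg_le_abs u).trans hu)
    rw [signedPow_neg, signedPow_neg] at h
    linarith
  have hMr : 0 ≤ M ^ r := rpow_nonneg ((abs_nonneg u).trans hu) r
  have hv' : |v| ^ r * v ≤ M ^ r * v :=
    mul_le_mul_of_nonneg_right (rpow_le_rpow (abs_nonneg v) hv hr) hv0
  have hu' : |u| ^ r * -u ≤ M ^ r * -u :=
    mul_le_mul_of_nonneg_right (rpow_le_rpow (abs_nonneg u) hu hr) (neg_nonneg.2 hu0)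
  have hrM : 0 ≤ r * (M ^ r * (v - u)) := mul_nonneg hr (mul_nonneg hMr (sub_nonneg.2 huv))
  simp only [signedPow]
  linarith

lemma mul_le_eps_mul_rpow_add_rpow {a b x y ε : ℝ} (hab : a.HolderConjugate b)
    (hx : 0 ≤ x) (hy : 0 ≤ y) (hε : 0 < ε) :
    x * y ≤ ε * x ^ a + ε ^ (-(b / a)) * y ^ b := by
  have ha := hab.pos
  have hb := hab.symm.pos
  have hx' : 0 ≤ ε ^ a⁻¹ * x := by positivity
  have hy' : 0 ≤ ε ^ (-a⁻¹) * y := by positivity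
  have hyoung := young_inequality_of_nonneg hx' hy' hab
  have hprod : ε ^ a⁻¹ * x * (ε ^ (-a⁻¹) * y) = x * y := by
    rw [mul_mul_mul_comm, ← rpow_add hε, add_neg_cancel, rpow_zero, one_mul]
  have hxa : (ε ^ a⁻¹ * x) ^ a = ε * x ^ a := by
    rw [mul_rpow (by positivity) hx, ← rpow_mul hε.le, inv_mul_cancel₀ ha.ne', rpow_one]
  have hyb : (ε ^ (-a⁻¹) * y) ^ b = ε ^ (-(b / a)) * y ^ b := by
    rw [mul_rpow (by positivity) hy, ← rpow_mul hε.le, neg_mul, inv_mul_eq_div]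
  rw [hprod, hxa, hyb] at hyoung
  have h1 : ε * x ^ a / a ≤ ε * x ^ a := div_le_self (by positivity) hab.lt.le
  have h2 : ε ^ (-(b / a)) * y ^ b / b ≤ ε ^ (-(b / a)) * y ^ b :=
    div_le_self (by positivity) hab.symm.lt.le
  linarith

lemma rpow_mul_rpow_le_eps_mul_sq_add {p M T ε : ℝ} (hp : 2 < p) (hM : 0 ≤ M) (hT : 0 ≤ T)
    (hε : 0 < ε) :
    (M ^ ((p - 2) / 2) * T) ^ (p / (p - 1)) ≤ ε * T ^ 2 + ε ^ (-(p / (p - 2))) * M ^ p := by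
  have hp1 : 0 < p - 1 := by linarith
  have hp2 : 0 < p - 2 := by linarith
  have hconj : (2 * (p - 1) / p).HolderConjugate (2 * (p - 1) / (p - 2)) := by
    rw [holderConjugate_iff, lt_div_iff₀ (by linarith), inv_div, inv_div]
    constructor
    · linarith
    · field_simp
      ring
  have h := mul_le_eps_mul_rpow_add_rpow hconj (rpow_nonneg hT (p / (p - 1)))
    (rpow_nonneg (rpow_nonneg hM ((p - 2) / 2)) (p / (p - 1))) hε
  have hT2 : (T ^ (p / (p - 1))) ^ (2 * (p - 1) / p) = T ^ 2 := by
    rw [← rpow_mul hT, show p / (p - 1) * (2 * (p - 1) / p) = 2 by field_simp, rpow_two]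
  have hMp : ((M ^ ((p - 2) / 2)) ^ (p / (p - 1))) ^ (2 * (p - 1) / (p - 2)) = M ^ p := by
    rw [← rpow_mul (rpow_nonneg hM _), ← rpow_mul hM]
    congr 1
    field_simp
  rw [hT2, hMp, show 2 * (p - 1) / (p - 2) / (2 * (p - 1) / p) = p / (p - 2) by field_simp] at h
  rwa [mul_rpow (rpow_nonneg hM _) hT, mul_comm]

lemma signedPow_signedPow_eq_signedPow_sub_two {p : ℝ} (hp : p ≠ 0) (x : ℝ) :
    signedPow ((p - 2) / p) (signedPow ((p - 2) / 2) x) = signedPow (p - 2) x := by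
  rw [signedPow_signedPow]
  congr 1
  field_simp
  ring

lemma abs_signedPow_sub_signedPow_le_mul_half {p : ℝ} (hp : 2 ≤ p) (a b : ℝ) :
    |signedPow (p - 2) b - signedPow (p - 2) a| ≤
      2 * (max |a| |b| ^ ((p - 2) / 2) *
        |signedPow ((p - 2) / 2) b - signedPow ((p - 2) / 2) a|) := by
  have hp0 : p ≠ 0 := by positivity
  have hM : 0 ≤ max |a| |b| := (abs_nonneg a).trans (le_max_left _ _)
  have hbound {x : ℝ} (hx : |x| ≤ max |a| |b|) :
      |signedPow ((p - 2) / 2) x| ≤ max |a| |b| ^ (p / 2) := by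
    rw [abs_signedPow (by linarith), show (p - 2) / 2 + 1 = p / 2 by ring]
    exact rpow_le_rpow (abs_nonneg x) hx (by linarith)
  have hlip := abs_signedPow_sub_signedPow_le (r := (p - 2) / p)
    (div_nonneg (by linarith) (by linarith)) (hbound (le_max_left _ _)) (hbound (le_max_right _ _))
  rw [signedPow_signedPow_eq_signedPow_sub_two hp0, signedPow_signedPow_eq_signedPow_sub_two hp0,
    ← rpow_mul hM, show p / 2 * ((p - 2) / p) = (p - 2) / 2 by field_simp] at hlip
  refine hlip.trans ?_
  rw [mul_assoc]
  gcongr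
  rw [div_add_one hp0, div_le_iff₀ (by linarith)]
  linarith

/-- For `p ≥ 2`, `q = p/(p−1)`, there is `C = C(p)` such that for every `ε > 0` and all reals `a, b`:
`||b|^{p-2}b − |a|^{p-2}a|^q ≤ C(ε ||b|^{(p-2)/2}b − |a|^{(p-2)/2}a|² + ε^{−p/(p−2)}(|b|^p + |a|^p))`. -/
theorem signed_power_difference_young_bound (p q : ℝ) (hp : 2 ≤ p) (hq : q = p / (p - 1)) :
    ∃ C > 0, ∀ ε > (0 : ℝ), ∀ a b : ℝ,
      (abs (|b| ^ (p - 2) * b - |a| ^ (p - 2) * a)) ^ q ≤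
        C * (ε * (abs (|b| ^ ((p - 2) / 2) * b - |a| ^ ((p - 2) / 2) * a)) ^ 2 +
          ε ^ (-(p / (p - 2))) * (|b| ^ p + |a| ^ p)) := by
  refine ⟨4, by norm_num, fun ε hε a b => ?_⟩
  obtain rfl | hp2 := hp.eq_or_lt
  · -- `p / (p - 2) = 2 / 0 = 0`: the claim is `(b - a) ^ 2 ≤ 4 (ε (b - a) ^ 2 + b ^ 2 + a ^ 2)`
    norm_num [hq]
    nlinarith [sq_nonneg (a + b), mul_nonneg hε.le (sq_nonneg (b - a))]
  subst hq
  set M := max |a| |b|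
  set T := |signedPow ((p - 2) / 2) b - signedPow ((p - 2) / 2) a|
  have hM : 0 ≤ M := (abs_nonneg a).trans (le_max_left _ _)
  have hMp : M ^ p ≤ |b| ^ p + |a| ^ p := by
    rw [add_comm, rpow_max (abs_nonneg a) (abs_nonneg b) (by linarith)]
    exact max_le_add_of_nonneg (rpow_nonneg (abs_nonneg a) p) (rpow_nonneg (abs_nonneg b) p)
  have hq2 : p / (p - 1) ≤ 2 := by rw [div_le_iff₀ (by linarith)]; linarith
  calc |(|b| ^ (p - 2) * b - |a| ^ (p - 2) * a)| ^ (p / (p - 1))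
      ≤ (2 * (M ^ ((p - 2) / 2) * T)) ^ (p / (p - 1)) :=
        rpow_le_rpow (abs_nonneg _) (abs_signedPow_sub_signedPow_le_mul_half hp a b)
          (div_nonneg (by linarith) (by linarith))
    _ = 2 ^ (p / (p - 1)) * (M ^ ((p - 2) / 2) * T) ^ (p / (p - 1)) :=
        mul_rpow zero_le_two (by positivity)
    _ ≤ 2 ^ (2 : ℝ) * (ε * T ^ 2 + ε ^ (-(p / (p - 2))) * M ^ p) := by
        gcongr
        · norm_num
        · exact rpow_mul_rpow_le_eps_mul_sq_add hp2 hM (abs_nonneg _) hε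
    _ ≤ 4 * (ε * T ^ 2 + ε ^ (-(p / (p - 2))) * (|b| ^ p + |a| ^ p)) := by
        rw [rpow_two]
        gcongr
        norm_num
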